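/- Let β ≥ 1 be an integer and let j be an integer with 0 ≤ j ≤ β. Then for every real x ≠ 0, Q_{β,j}(1/x) = 2^{j} x^{j−β} Y_{β−1}^{(j)}(x), where Y_{β−1}^{(j)} denotes the j-th derivative of the Bessel polynomial Y_{β−1} and x^{j−β} is the (possibly negative) integer power of x. -/

import Mathlib

/-
Both sides are sums over `k < β - j`. Differentiating `Y_{β-1}` termwise `j` times turns the
coefficient of `x^(k+j)` into `(k+j)!/k!` times itself at `x^k`; multiplying by `2^j x^{j-β}` turns
`x^k` into `(1/x)^(β-j-k)` with exactly the coefficient of `Q_{β,j}`.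
-/

open Finset

/-- The `m`-th Bessel polynomial `Y_m(x) = Σ_{k=0}^{m} (m+k)!/(k!(m-k)!) (x/2)^k`,
as a function on `ℝ`. -/
noncomputable def besselY (m : ℕ) (x : ℝ) : ℝ :=
  ∑ k ∈ Finset.range (m + 1),
    (Nat.factorial (m + k) : ℝ) / (Nat.factorial k * Nat.factorial (m - k)) * (x / 2) ^ k

/-- `Q_{β,j}(x) = Σ_{k=0}^{β-j-1} (β+j+k-1)!/(k!(β-j-k-1)!) 2^{-k} x^{β-j-k}`
(the empty sum when `j ≥ β`), as a function on `ℝ`. -/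
noncomputable def Qbeta (β j : ℕ) (x : ℝ) : ℝ :=
  ∑ k ∈ Finset.range (β - j),
    (Nat.factorial (β + j + k - 1) : ℝ) /
      (Nat.factorial k * Nat.factorial (β - j - k - 1)) * (1 / 2) ^ k * x ^ (β - j - k)

open scoped Nat

theorem iteratedDeriv_sum_range_mul_pow {𝕜 : Type*} [NontriviallyNormedField 𝕜]
    (c : ℕ → 𝕜) (n j : ℕ) (x : 𝕜) :
    iteratedDeriv j (fun y => ∑ k ∈ range n, c k * y ^ k) x =
      ∑ k ∈ range (n - j), ((k + j).descFactorial j : 𝕜) * c (k + j) * x ^ k := by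
  rw [iteratedDeriv_fun_sum fun _ _ => by fun_prop]
  simp only [iteratedDeriv_const_mul_field, iteratedDeriv_pow]
  have low_vanish : ∀ k < j, c k * ((k.descFactorial j : 𝕜) * x ^ (k - j)) = 0 := fun k hk => by
    rw [Nat.descFactorial_eq_zero_iff_lt.mpr hk, Nat.cast_zero, zero_mul, mul_zero]
  rcases le_total j n with hjn | hnj
  · rw [← sum_range_add_sum_Ico _ hjn, sum_Ico_eq_sum_range,
      sum_eq_zero fun k hk => low_vanish k (mem_range.mp hk), zero_add]
    refine sum_congr rfl fun k _ => ?_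
    rw [add_comm j k, Nat.add_sub_cancel]
    ring
  · rw [Nat.sub_eq_zero_of_le hnj, sum_range_zero]
    exact sum_eq_zero fun k hk => low_vanish k ((mem_range.mp hk).trans_le hnj)

theorem besselY_eq_sum_mul_pow (m : ℕ) :
    besselY m = fun y => ∑ k ∈ range (m + 1),
      (m + k)! / (k ! * (m - k)! : ℝ) * (1 / 2) ^ k * y ^ k := by
  funext y
  refine sum_congr rfl fun k _ => ?_
  rw [div_pow, one_div_pow]
  ring

theorem iteratedDeriv_besselY (m j : ℕ) (x : ℝ) :
    iteratedDeriv j (besselY m) x =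
      ∑ k ∈ range (m + 1 - j),
        (m + j + k)! / (k ! * (m - j - k)! : ℝ) * (1 / 2) ^ (j + k) * x ^ k := by
  rw [besselY_eq_sum_mul_pow, iteratedDeriv_sum_range_mul_pow]
  refine sum_congr rfl fun k _ => ?_
  have hfac : ((k + j)! : ℝ) = k ! * (k + j).descFactorial j := by
    rw [← Nat.factorial_mul_descFactorial (Nat.le_add_left j k), Nat.add_sub_cancel]
    push_cast
    ring
  rw [show m + (k + j) = m + j + k by omega, show m - (k + j) = m - j - k by omega, hfac]
  have hdesc : ((k + j).descFactorial j : ℝ) ≠ 0 :=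
    Nat.cast_ne_zero.mpr (Nat.descFactorial_eq_zero_iff_lt.not.mpr (by omega))
  field_simp
  ring

-- The exponents add up to `j + k - β ≠ 0`, so this also holds at `x = 0`, where `1 / 0 = 0`.
theorem one_div_pow_eq_zpow_mul_pow {K : Type*} [DivisionRing K] (x : K) {β j k : ℕ}
    (hk : k < β - j) :
    (1 / x) ^ (β - j - k) = x ^ ((j : ℤ) - β) * x ^ k := by
  rw [← zpow_natCast x k, ← zpow_add' (Or.inr (Or.inl (by omega))), one_div, ← zpow_natCast,
    inv_zpow', Nat.cast_sub (by omega), Nat.cast_sub (by omega)]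
  congr 1
  ring

theorem statement6_general (β j : ℕ) (hβ : 1 ≤ β) (x : ℝ) :
    Qbeta β j (1 / x) =
      2 ^ j * x ^ ((j : ℤ) - (β : ℤ)) * iteratedDeriv j (besselY (β - 1)) x := by
  rw [iteratedDeriv_besselY, Nat.sub_add_cancel hβ, Qbeta, mul_sum]
  refine sum_congr rfl fun k hk => ?_
  rw [show β - 1 + j + k = β + j + k - 1 by omega, show β - 1 - j - k = β - j - k - 1 by omega,
    one_div_pow_eq_zpow_mul_pow x (mem_range.mp hk), pow_add, one_div_pow (2 : ℝ) j]
  field_simp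

/-- for integers `1 ≤ β` and `0 ≤ j ≤ β` and real `x ≠ 0`,
`Q_{β,j}(1/x) = 2^j x^{j-β} Y_{β-1}^{(j)}(x)`, where `Y_{β-1}^{(j)}` is the `j`-th
derivative of the Bessel polynomial `Y_{β-1}`. -/
theorem statement6 (β j : ℕ) (hβ : 1 ≤ β) (hj : j ≤ β) (x : ℝ) (hx : x ≠ 0) :
    Qbeta β j (1 / x) =
      2 ^ j * x ^ ((j : ℤ) - (β : ℤ)) * iteratedDeriv j (besselY (β - 1)) x :=
  statement6_general β j hβ x
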